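/- Let ε = ε(n) satisfy ε → 0 and ε³n²/log n → ∞ as n → ∞. Let X be a binomial random variable with parameters ⌊2(n−1)(1+ε/2)/(1+ε)⌋·⌊α ε⁻²/2⌋ and (1+ε)/(2(n−1)). Then for all α and n sufficiently large, P( X < α ε⁻²/2 + α ε⁻¹/16 ) ≤ exp(−α/2⁸). -/

import Mathlib

open MeasureTheory Filter
open scoped Classical

noncomputable section

/-- The binomial distribution `Bi(N, p)` as a `PMF` on `ℕ`
(with `p` truncated into `[0,1]`). -/
def binomPMF (N : ℕ) (p : ℝ) : PMF ℕ :=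
  (PMF.binomial (min (Real.toNNReal p) 1) (min_le_right _ _) N).map Fin.val

/-- `μ` is the law of an i.i.d. sequence of `Bi(N, p)` random variables, characterized by
its values on cylinder sets.  (This is the law of the successive family sizes in the
exploration of a Galton–Watson branching process with offspring distribution `Bi(N,p)`.) -/
def IsIIDBinomialSeq (N : ℕ) (p : ℝ) (μ : Measure (ℕ → ℕ)) : Prop :=
  IsProbabilityMeasure μ ∧
    ∀ (s : Finset ℕ) (g : ℕ → ℕ),
      μ {z | ∀ i ∈ s, z i = g i} = ∏ i ∈ s, binomPMF N p (g i)

/-- Total progeny of a Galton–Watson process started from `k` individuals, read off from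
the sequence `z` of successive family sizes in its exploration: the walk `Q_t = k + Σ_{s<t} z s`
gives the total number of individuals found by time `t`, `G_t = Q_t - t` the number of
unexplored ones, and the total progeny is `Q_{T₀} = T₀` where `T₀ = inf{t : G_t = 0}`
(`∞` if the process survives forever). -/
def gwProgeny (k : ℕ) (z : ℕ → ℕ) : ℕ∞ :=
  if h : ∃ t, k + ∑ s ∈ Finset.range t, z s = t then ((Nat.find h : ℕ) : ℕ∞) else ⊤

end

/-!
The mean of `X` is `⌊A⌋₊⌊B⌋₊p ≈ (1 + ε/2)·αε⁻²/2` with `A = 2(n−1)(1+ε/2)/(1+ε)`, `B = αε⁻²/2`,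
so it exceeds the threshold `αε⁻²/2 + αε⁻¹/16` by about `3αε⁻¹/16`; rounding down `A` and `B` costs
only `O(1) + Bp = O(1) + O(αε⁻²/n)`, which is `o(αε⁻¹)` because `εn → ∞`. The lower-tail Chernoff
bound `P(Bi(N,p) < Np − t) ≤ exp(−t²/(2Np))`, proved from the moment generating function and
`e⁻ˢ ≤ 1 − s + s²/2`, then applies with `t ≥ αε⁻¹/8` and `Np ≤ αε⁻²`.
-/

open ProbabilityTheory unitInterval Real Topology

lemma binomPMF_toMeasure_eq_binomial (N : ℕ) {p : ℝ} (hp : p ∈ I) :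
    (binomPMF N p).toMeasure = Bin(N, ⟨p, hp⟩) := by
  refine Measure.ext_of_singleton fun k => ?_
  have hp' : (min (p.toNNReal : ENNReal) 1) = ENNReal.ofReal p :=
    min_eq_left (ENNReal.ofReal_le_one.2 hp.2)
  have hq : 1 - ENNReal.ofReal p = ENNReal.ofReal (1 - p) := by
    rw [ENNReal.ofReal_sub _ hp.1, ENNReal.ofReal_one]
  rw [PMF.toMeasure_apply_singleton _ _ (measurableSet_singleton k), binomial_singleton,
    binomPMF, PMF.map_apply]
  simp only [PMF.binomial, Fin.val_last, ENNReal.coe_mul, ENNReal.coe_pow, ENNReal.coe_min,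
    ENNReal.coe_one, ENNReal.coe_sub, ENNReal.coe_natCast, PMF.ofFintype_apply, tsum_fintype,
    hp', hq]
  by_cases hk : k ≤ N
  · rw [Finset.sum_eq_single_of_mem (⟨k, by omega⟩ : Fin (N + 1)) (Finset.mem_univ _)]
    · rw [if_pos rfl, ENNReal.ofReal_mul (by have := hp.1; positivity),
        ENNReal.ofReal_mul (by positivity), ENNReal.ofReal_pow hp.1,
        ENNReal.ofReal_pow (by linarith [hp.2]), ENNReal.ofReal_natCast]
      ring
    · exact fun a _ ha => if_neg fun h => ha (Fin.ext h.symm)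
  · rw [Finset.sum_eq_zero, Nat.choose_eq_zero_of_lt (by omega)]
    · simp
    · exact fun a _ => if_neg (by omega)

lemma mgf_binomial (N : ℕ) (p : I) (t : ℝ) :
    mgf (fun k : ℕ => (k : ℝ)) Bin(N, p) t = (p * exp t + (1 - p)) ^ N := by
  rw [mgf, integral_binomial, add_pow, Nat.range_succ_eq_Iic]
  refine Finset.sum_congr rfl fun k _ => ?_
  rw [smul_eq_mul, mul_pow, ← exp_nat_mul]
  ring_nf

lemma binomial_real_lt_le_exp (N : ℕ) (p : I) (m : ℝ) {s : ℝ} (hs : 0 ≤ s) :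
    Bin(N, p).real {k | (k : ℝ) < m} ≤ exp (s * m - N * p * (1 - exp (-s))) := by
  have hbase : p * exp (-s) + (1 - p) ≤ exp (-(p * (1 - exp (-s)))) := by
    linarith [add_one_le_exp (-(p * (1 - exp (-s))))]
  calc Bin(N, p).real {k | (k : ℝ) < m}
      ≤ Bin(N, p).real {k | (k : ℝ) ≤ m} := measureReal_mono fun k (hk : (k : ℝ) < m) => hk.le
    _ ≤ exp (s * m) * mgf (fun k : ℕ => (k : ℝ)) Bin(N, p) (-s) := by
      simpa using measure_le_le_exp_mul_mgf m (neg_nonpos.2 hs) (integrable_binomial _)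
    _ ≤ exp (s * m) * exp (-(p * (1 - exp (-s)))) ^ N := by
      rw [mgf_binomial]
      gcongr
      exact add_nonneg (mul_nonneg p.2.1 (exp_nonneg _)) (sub_nonneg.2 p.2.2)
    _ = exp (s * m - N * p * (1 - exp (-s))) := by
      rw [← exp_nat_mul, ← exp_add]
      ring_nf

lemma exp_neg_le_one_sub_add_sq_div_two {s : ℝ} (hs : 0 ≤ s) : exp (-s) ≤ 1 - s + s ^ 2 / 2 := by
  rw [exp_neg, inv_le_iff_one_le_mul₀ (exp_pos s)]
  -- `(1 + s + s²/2)(1 - s + s²/2) = 1 + s⁴/4`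
  nlinarith [quadratic_le_exp_of_nonneg hs, sq_nonneg (s - 1), pow_nonneg hs 4]

lemma binomial_real_lt_mean_sub_le (N : ℕ) (p : I) {t : ℝ} (ht : 0 ≤ t) :
    Bin(N, p).real {k | (k : ℝ) < N * p - t} ≤ exp (-t ^ 2 / (2 * (N * p))) := by
  set μ : ℝ := N * p
  have hμ : 0 ≤ μ := mul_nonneg (Nat.cast_nonneg N) p.2.1
  refine (binomial_real_lt_le_exp N p _ (div_nonneg ht hμ)).trans (exp_le_exp.2 ?_)
  have hs := exp_neg_le_one_sub_add_sq_div_two (div_nonneg ht hμ)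
  rcases hμ.eq_or_lt with h0 | hpos
  · simp [← h0]
  · calc t / μ * (μ - t) - μ * (1 - exp (-(t / μ)))
        ≤ t / μ * (μ - t) - μ * (t / μ - (t / μ) ^ 2 / 2) :=
          sub_le_sub_left (mul_le_mul_of_nonneg_left (by linarith) hμ) _
      _ = -t ^ 2 / (2 * μ) := by field_simp; ring

lemma sub_one_mul_sub_one_le_floor_mul_floor (a : ℝ) {b : ℝ} (hb : 1 ≤ b) :
    (a - 1) * (b - 1) ≤ ((⌊a⌋₊ * ⌊b⌋₊ : ℕ) : ℝ) := by
  push_cast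
  exact mul_le_mul (Nat.sub_one_lt_floor a).le (Nat.sub_one_lt_floor b).le (by linarith)
    (Nat.cast_nonneg _)

lemma floor_mul_floor_le {a b : ℝ} (ha : 0 ≤ a) (hb : 0 ≤ b) :
    ((⌊a⌋₊ * ⌊b⌋₊ : ℕ) : ℝ) ≤ a * b := by
  push_cast
  exact mul_le_mul (Nat.floor_le ha) (Nat.floor_le hb) (Nat.cast_nonneg _) ha

lemma binomial_mean_bounds {e r α : ℝ} (he : 0 < e) (he1 : e ≤ 1 / 128)
    (hre : 32 ≤ (r - 1) * e) (hα : 2 ≤ α) :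
    α / (8 * e) ≤ ((⌊2 * (r - 1) * (1 + e / 2) / (1 + e)⌋₊ * ⌊α * e⁻¹ ^ 2 / 2⌋₊ : ℕ) : ℝ) *
        ((1 + e) / (2 * (r - 1))) - (α * e⁻¹ ^ 2 / 2 + α * e⁻¹ / 16) ∧
      ((⌊2 * (r - 1) * (1 + e / 2) / (1 + e)⌋₊ * ⌊α * e⁻¹ ^ 2 / 2⌋₊ : ℕ) : ℝ) *
        ((1 + e) / (2 * (r - 1))) ≤ α / e ^ 2 := by
  set A := 2 * (r - 1) * (1 + e / 2) / (1 + e) with hA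
  set B := α * e⁻¹ ^ 2 / 2 with hB
  set p := (1 + e) / (2 * (r - 1)) with hp
  set N := ((⌊A⌋₊ * ⌊B⌋₊ : ℕ) : ℝ)
  set y := α / e with hy_def
  have hr : 0 < r - 1 := pos_of_mul_pos_left (by linarith) he.le
  have hA0 : 0 ≤ A := by rw [hA]; have := hr.le; positivity
  have hp0 : 0 ≤ p := by positivity
  have hy : 128 ≤ y := by rw [le_div_iff₀ he]; nlinarith
  have hAp : A * p = 1 + e / 2 := by rw [hA, hp]; field_simp
  have heB : e * B = y / 2 := by rw [hB, hy_def]; field_simp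
  have hB1 : 1 ≤ B := by nlinarith
  have hBp : B * p ≤ y / 64 :=
    calc B * p = α * (1 + e) / (4 * e * ((r - 1) * e)) := by rw [hB, hp]; field_simp; ring
      _ ≤ α * 2 / (4 * e * 32) := by gcongr; linarith
      _ = y / 64 := by ring
  constructor
  · have hN : (1 + e / 2) * B - (1 + e / 2) - B * p ≤ N * p := by
      calc _ ≤ (A - 1) * (B - 1) * p := by rw [← hAp]; nlinarith
        _ ≤ N * p := by gcongr; exact sub_one_mul_sub_one_le_floor_mul_floor A hB1
    have h8 : α / (8 * e) = y / 8 := by ring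
    have hy' : α * e⁻¹ = y := by ring
    linarith
  · calc N * p ≤ A * B * p := by gcongr; exact floor_mul_floor_le hA0 (by linarith)
      _ = (1 + e / 2) * B := by rw [mul_right_comm, hAp]
      _ ≤ 2 * B := by gcongr; linarith
      _ = α / e ^ 2 := by rw [hB]; field_simp

lemma eventually_regime {ε : ℕ → ℝ} (hε0 : Tendsto ε atTop (𝓝 0))
    (hε3 : Tendsto (fun n => ε n ^ 3 * (n : ℝ) ^ 2 / log n) atTop atTop) :
    ∀ᶠ n : ℕ in atTop, 0 < ε n ∧ ε n ≤ 1 / 128 ∧ 32 ≤ ((n : ℝ) - 1) * ε n := by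
  filter_upwards [hε0.eventually (ge_mem_nhds (by norm_num : (0 : ℝ) < 1 / 128)),
    hε3.eventually_ge_atTop (33 ^ 3), eventually_ge_atTop 3] with n hε hbig hn
  have hn' : (3 : ℝ) ≤ n := by exact_mod_cast hn
  have hlog : 1 ≤ log n := by
    rw [le_log_iff_exp_le (by positivity)]
    linarith [exp_one_lt_d9]
  have hpos : 0 < ε n := by
    by_contra! h
    have : ε n ^ 3 * (n : ℝ) ^ 2 / log n ≤ 0 :=
      div_nonpos_of_nonpos_of_nonneg (mul_nonpos_of_nonpos_of_nonneg (Odd.pow_nonpos ⟨1, rfl⟩ h)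
        (sq_nonneg _)) (by positivity)
    linarith
  have hcube : (33 : ℝ) ^ 3 ≤ (ε n * n) ^ 3 :=
    calc (33 : ℝ) ^ 3 ≤ ε n ^ 3 * (n : ℝ) ^ 2 / log n := hbig
      _ ≤ ε n ^ 3 * (n : ℝ) ^ 2 := div_le_self (by positivity) hlog
      _ ≤ ε n ^ 3 * (n : ℝ) ^ 2 * n := le_mul_of_one_le_right (by positivity) (by linarith)
      _ = (ε n * n) ^ 3 := by ring
  have h33 : 33 ≤ ε n * n := le_of_pow_le_pow_left₀ three_ne_zero (by positivity) hcube
  exact ⟨hpos, hε, by nlinarith⟩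

/-- Let `ε = ε(n)` satisfy `ε → 0` and `ε³n²/log n → ∞`, and let
`X ~ Bi(⌊2(n−1)(1+ε/2)/(1+ε)⌋·⌊α ε⁻²/2⌋, (1+ε)/(2(n−1)))`.  Then for all `α` and `n`
sufficiently large, `P(X < α ε⁻²/2 + α ε⁻¹/16) ≤ exp(−α/2⁸)`. -/
theorem binomial_lower_tail_bound (ε : ℕ → ℝ)
    (hε0 : Tendsto ε atTop (nhds 0))
    (hε3 : Tendsto (fun n => ε n ^ 3 * (n : ℝ) ^ 2 / Real.log n) atTop atTop) :
    ∃ α₀ : ℝ, ∃ n₀ : ℕ, ∀ α : ℝ, α₀ ≤ α → ∀ n : ℕ, n₀ ≤ n →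
      (binomPMF (⌊2 * ((n : ℝ) - 1) * (1 + ε n / 2) / (1 + ε n)⌋₊ * ⌊α * (ε n)⁻¹ ^ 2 / 2⌋₊)
          ((1 + ε n) / (2 * ((n : ℝ) - 1)))).toMeasure
          {k | (k : ℝ) < α * (ε n)⁻¹ ^ 2 / 2 + α * (ε n)⁻¹ / 16}
        ≤ ENNReal.ofReal (Real.exp (-α / 2 ^ 8)) := by
  obtain ⟨n₀, hn₀⟩ := eventually_atTop.1 (eventually_regime hε0 hε3)
  refine ⟨2, n₀, fun α hα n hn => ?_⟩
  obtain ⟨he, he1, hre⟩ := hn₀ n hn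
  obtain ⟨hlow, hup⟩ := binomial_mean_bounds he he1 hre hα
  set N := ⌊2 * ((n : ℝ) - 1) * (1 + ε n / 2) / (1 + ε n)⌋₊ * ⌊α * (ε n)⁻¹ ^ 2 / 2⌋₊
  set p := (1 + ε n) / (2 * ((n : ℝ) - 1))
  set m := α * (ε n)⁻¹ ^ 2 / 2 + α * (ε n)⁻¹ / 16
  have hp : p ∈ I := by
    have : 0 < (n : ℝ) - 1 := pos_of_mul_pos_left (by linarith) he.le
    exact ⟨by positivity, (div_le_one (by positivity)).2 (by nlinarith)⟩
  have hα0 : 0 < α := by linarith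
  have hm : 0 ≤ m := by positivity
  have hgap : 0 < α / (8 * ε n) := by positivity
  have ht : 0 ≤ N * p - m := hgap.le.trans hlow
  have tail := binomial_real_lt_mean_sub_le N ⟨p, hp⟩ ht
  dsimp only at tail
  rw [sub_sub_cancel] at tail
  rw [binomPMF_toMeasure_eq_binomial N hp, ← ofReal_measureReal]
  refine ENNReal.ofReal_le_ofReal (tail.trans (exp_le_exp.2 ?_))
  rw [neg_div, neg_div, neg_le_neg_iff]
  calc α / 2 ^ 8 ≤ α / 128 := by linarith
    _ = (α / (8 * ε n)) ^ 2 / (2 * (α / ε n ^ 2)) := by field_simp; ring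
    _ ≤ (N * p - m) ^ 2 / (2 * (N * p)) := by gcongr; linarith
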